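/- Every synchronizing word of the Černý automaton C_n has length at least (n−1)². -/

import Mathlib

inductive Letter : Type
  | a : Letter
  | b : Letter
deriving DecidableEq

def cernyStep (n : ℕ) : ZMod n → Letter → ZMod n
  | i, Letter.a => if i = 0 then 1 else i
  | i, Letter.b => i + 1

/-!
Read a synchronizing word backwards from its final state `q₀`. The states that a suffix `s` sends
to `q₀` lie in a cyclic interval `[x, x + ℓ)` of `ℤ/nℤ`. Prepending `b` shifts the interval by `-1`;
prepending `a` keeps it, except when it contains `1` but not `0`, i.e. it is `[1, 1 + ℓ)`, and then
it only grows to `[0, 1 + ℓ)`. So the potential `(ℓ - 1) n - val (x - 1)` increases by at most one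
per letter: growing the interval by one state costs a full turn of `b`'s. It starts at most `0` and
must reach `(n - 1)²` before the interval covers `ℤ/nℤ`.
-/

namespace Cerny

variable {n : ℕ}

def cyclicInterval (x : ZMod n) (ℓ : ℕ) : Set (ZMod n) := (fun k : ℕ => x + k) '' Set.Iio ℓ

def potential (x : ZMod n) (ℓ : ℕ) : ℤ := ((ℓ : ℤ) - 1) * n - (x - 1).val

lemma le_of_univ_subset_cyclicInterval {x : ZMod n} {ℓ : ℕ}
    (h : Set.univ ⊆ cyclicInterval x ℓ) : n ≤ ℓ :=
  calc n = (Set.univ : Set (ZMod n)).ncard := by rw [Set.ncard_univ, Nat.card_zmod]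
    _ ≤ (cyclicInterval x ℓ).ncard := Set.ncard_le_ncard h ((Set.finite_Iio ℓ).image _)
    _ ≤ (Set.Iio ℓ).ncard := Set.ncard_image_le (Set.finite_Iio ℓ)
    _ = ℓ := Set.ncard_Iio_nat ℓ

lemma insert_sub_one_cyclicInterval (x : ZMod n) (ℓ : ℕ) :
    insert (x - 1) (cyclicInterval x ℓ) = cyclicInterval (x - 1) (ℓ + 1) := by
  ext y
  simp only [cyclicInterval, Set.mem_insert_iff, Set.mem_image, Set.mem_Iio]
  constructor
  · rintro (rfl | ⟨k, hk, rfl⟩)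
    · exact ⟨0, by omega, by simp⟩
    · exact ⟨k + 1, by omega, by push_cast; ring⟩
  · rintro ⟨_ | k, hk, rfl⟩
    · simp
    · exact Or.inr ⟨k, by omega, by push_cast; ring⟩

lemma eq_of_mem_cyclicInterval_of_sub_one_notMem {x y : ZMod n} {ℓ : ℕ}
    (hy : y ∈ cyclicInterval x ℓ) (hy' : y - 1 ∉ cyclicInterval x ℓ) : y = x := by
  obtain ⟨_ | k, hk, rfl⟩ := hy
  · simp
  · exact absurd ⟨k, Nat.lt_of_succ_lt hk, by push_cast; ring⟩ hy'

lemma preimage_cernyStep_b (x : ZMod n) (ℓ : ℕ) :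
    (cernyStep n · Letter.b) ⁻¹' cyclicInterval x ℓ = cyclicInterval (x - 1) ℓ := by
  ext p
  simp only [cyclicInterval, cernyStep, Set.mem_preimage, Set.mem_image, sub_add_eq_add_sub,
    sub_eq_iff_eq_add]

lemma preimage_cernyStep_a_subset_insert (s : Set (ZMod n)) :
    (cernyStep n · Letter.a) ⁻¹' s ⊆ insert 0 s := by
  intro p hp
  by_cases h : p = 0
  · exact Or.inl h
  · simpa [cernyStep, h] using hp

lemma preimage_cernyStep_a_subset (s : Set (ZMod n)) (h : 0 ∈ s ∨ 1 ∉ s) :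
    (cernyStep n · Letter.a) ⁻¹' s ⊆ s := by
  intro p hp
  by_cases hp0 : p = 0
  · subst hp0
    simp only [Set.mem_preimage, cernyStep, if_true] at hp
    tauto
  · simpa [cernyStep, hp0] using hp

lemma potential_one_nonpos (x : ZMod n) : potential x 1 ≤ 0 := by
  simp [potential]

lemma potential_sub_one_le (x : ZMod n) (ℓ : ℕ) : potential (x - 1) ℓ ≤ potential x ℓ + 1 := by
  have h := ZMod.val_add_le (x - 1 - 1) 1
  have h1 : (1 : ZMod n).val ≤ 1 := by rw [ZMod.val_one_eq_one_mod]; exact Nat.mod_le 1 n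
  rw [sub_add_cancel] at h
  simp only [potential]
  omega

variable [NeZero n]

lemma potential_zero_succ (ℓ : ℕ) :
    potential (0 : ZMod n) (ℓ + 1) = potential (1 : ZMod n) ℓ + 1 := by
  obtain ⟨m, rfl⟩ : ∃ m, n = m + 1 := Nat.exists_eq_succ_of_ne_zero (NeZero.ne n)
  simp only [potential, zero_sub, ZMod.val_neg_one, sub_self, ZMod.val_zero]
  push_cast
  ring

lemma sq_le_potential (x : ZMod n) {ℓ : ℕ} (hℓ : n ≤ ℓ) : ((n : ℤ) - 1) ^ 2 ≤ potential x ℓ := by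
  have hval := (x - 1).val_lt
  simp only [potential]
  nlinarith

lemma exists_preimage_subset_cyclicInterval (l : Letter) (x : ZMod n) (ℓ : ℕ) :
    ∃ x' ℓ', (cernyStep n · l) ⁻¹' cyclicInterval x ℓ ⊆ cyclicInterval x' ℓ' ∧
      potential x' ℓ' ≤ potential x ℓ + 1 := by
  cases l with
  | b => exact ⟨x - 1, ℓ, (preimage_cernyStep_b x ℓ).subset, potential_sub_one_le x ℓ⟩
  | a =>
    by_cases h : 0 ∈ cyclicInterval x ℓ ∨ 1 ∉ cyclicInterval x ℓ
    · exact ⟨x, ℓ, preimage_cernyStep_a_subset _ h, (lt_add_one _).le⟩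
    · rw [not_or, not_not] at h
      obtain rfl : 1 = x := eq_of_mem_cyclicInterval_of_sub_one_notMem h.2 (by simpa using h.1)
      refine ⟨0, ℓ + 1, ?_, (potential_zero_succ ℓ).le⟩
      exact (preimage_cernyStep_a_subset_insert _).trans
        (by simpa using (insert_sub_one_cyclicInterval (1 : ZMod n) ℓ).le)

lemma exists_foldl_preimage_subset_cyclicInterval (q : ZMod n) (s : List Letter) :
    ∃ x ℓ, {p | s.foldl (cernyStep n) p = q} ⊆ cyclicInterval x ℓ ∧ potential x ℓ ≤ s.length := by
  induction s with
  | nil => exact ⟨q, 1, by simp [cyclicInterval], potential_one_nonpos q⟩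
  | cons l s ih =>
    obtain ⟨x, ℓ, hsub, hpot⟩ := ih
    obtain ⟨x', ℓ', hsub', hpot'⟩ := exists_preimage_subset_cyclicInterval l x ℓ
    refine ⟨x', ℓ', fun p hp => hsub' (hsub hp), ?_⟩
    push_cast [List.length_cons]
    omega

end Cerny

open Cerny in
theorem stmt6_general (n : ℕ) (w : List Letter)
    (hw : ∃ q0 : ZMod n, ∀ p : ZMod n, w.foldl (cernyStep n) p = q0) :
    (n - 1) ^ 2 ≤ w.length := by
  obtain rfl | hn := n.eq_zero_or_pos
  · simp
  have : NeZero n := ⟨hn.ne'⟩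
  obtain ⟨q, hq⟩ := hw
  obtain ⟨x, ℓ, hsub, hpot⟩ := exists_foldl_preimage_subset_cyclicInterval q w
  have hℓ : n ≤ ℓ := le_of_univ_subset_cyclicInterval fun p _ => hsub (hq p)
  have hsq := sq_le_potential x hℓ
  have : (((n - 1) ^ 2 : ℕ) : ℤ) ≤ w.length := by push_cast [Nat.cast_sub hn]; linarith
  exact_mod_cast this

/-- Every synchronizing word of the Černý automaton `C n` has length at least `(n-1)^2`. -/
theorem stmt6 (n : ℕ) (hn : 2 ≤ n) (w : List Letter)
    (hw : ∃ q0 : ZMod n, ∀ p : ZMod n, w.foldl (cernyStep n) p = q0) :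
    (n - 1) ^ 2 ≤ w.length :=
  stmt6_general n w hw
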